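/- arXiv:2402.19181 — 3 statements merged into one kernel-verified Lean document; each statement's English description precedes it below -/
import Mathlib

section
/- If M(s, τ₀) = 0 and M(s + π/4, τ₀) = 0 for some particular s and τ₀, then M(s', τ₀') = 0 for all s' and τ₀'. -/
open Real

theorem eq_zero_of_shift_eq_linear_combination {f a b : ℝ → ℝ} {s c : ℝ}
    (hshift : ∀ t, f (s + t) = a t * f s + b t * f (s + c))
    (h₀ : f s = 0) (hc : f (s + c) = 0) (x : ℝ) : f x = 0 := by
  simpa [h₀, hc] using hshift (x - s)

theorem eq_zero_of_eq_zero_on_slice {M : ℝ → ℝ → ℝ}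
    (hshift : ∀ s τ₀ τs : ℝ, M (s + τs) τ₀ = M s (τ₀ - τs))
    {τ₀ : ℝ} (hslice : ∀ x, M x τ₀ = 0) (s τ : ℝ) : M s τ = 0 := by
  simpa [hslice] using (hshift s τ₀ (τ₀ - τ)).symm

theorem melnikov_identically_zero
    (M : ℝ → ℝ → ℝ)
    (hshift1 : ∀ s τ₀ τs : ℝ,
      M (s + τs) τ₀ = cos (2 * τs) * M s τ₀ + sin (2 * τs) * M (s + π / 4) τ₀)
    (hshift2 : ∀ s τ₀ τs : ℝ, M (s + τs) τ₀ = M s (τ₀ - τs))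
    (s τ₀ : ℝ) (h1 : M s τ₀ = 0) (h2 : M (s + π / 4) τ₀ = 0) :
    ∀ s' τ₀' : ℝ, M s' τ₀' = 0 :=
  eq_zero_of_eq_zero_on_slice hshift2
    (eq_zero_of_shift_eq_linear_combination (f := (M · τ₀)) (hshift1 s τ₀) h1 h2)
end

section
/- Suppose J is T*-periodic and odd about the half-period point in the sense J(s + T* - τ) = -J(s + τ), K is T*-periodic and even in the sense K(s + T* - τ) = K(s + τ), L satisfies L(s + T* - τ) = -L(s + τ), and a·T* is an integer multiple of π. Then M(s, τ₀) = 2A·B where A = sin(2τ₀) if a = 1 and A = 0 if a ≥ 2 with sin(T*) ≠ 0, and B = ∫₀^{T*/2} (K(s+τ)cos(2τ) - J(s+τ)sin(2τ)) dτ. -/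
/-!
Reflecting `τ ↦ aT - τ` and using the symmetries (which persist about `s + aT/2` by
periodicity) pairs the Melnikov integrand with itself, leaving `M(s, τ₀) = sin 2τ₀ · ∫₀^{aT} g`
with `g τ = K(s+τ) cos 2τ - J(s+τ) sin 2τ`. For `a = 1`, `g` is symmetric about `T/2`, which
gives the factor `2 ∫₀^{T/2} g`. For `a ≥ 2`, `g` is the real part of
`G τ = (K + iJ)(s+τ) e^{2iτ}`; shifting by `T` multiplies `G` by `e^{2iT} ≠ 1`, while the
integral of the `aT`-periodic `G` over one period is shift invariant, so it vanishes.
-/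

open Real MeasureTheory intervalIntegral

namespace intervalIntegral

variable {E : Type*} [NormedAddCommGroup E] [NormedSpace ℝ E] {f : ℝ → E} {c : ℝ}

theorem integral_add_comp_sub_left_eq_two_smul (hf : Continuous f) :
    ∫ x in 0..c, (f x + f (c - x)) = (2 : ℝ) • ∫ x in 0..c, f x := by
  have hrefl : ∫ x in 0..c, f (c - x) = ∫ x in 0..c, f x := by
    simp only [integral_comp_sub_left f c, sub_self, sub_zero]
  have hint : IntervalIntegrable (fun x => f (c - x)) volume 0 c :=
    (hf.comp (continuous_sub_left c)).intervalIntegrable _ _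
  rw [integral_add (hf.intervalIntegrable _ _) hint, hrefl, two_smul]

theorem integral_eq_two_smul_integral_half_of_comp_sub_eq (hf : Continuous f)
    (hsym : ∀ x, f (c - x) = f x) :
    ∫ x in 0..c, f x = (2 : ℝ) • ∫ x in 0..c / 2, f x := by
  have hupper : ∫ x in c / 2..c, f x = ∫ x in 0..c / 2, f x := by
    conv_rhs => rw [← integral_congr (fun x _ => hsym x), integral_comp_sub_left f c]
    congr 1 <;> ring
  rw [← integral_add_adjacent_intervals (hf.intervalIntegrable 0 (c / 2))
    (hf.intervalIntegrable _ _), hupper, two_smul]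

end intervalIntegral

theorem Function.Periodic.intervalIntegral_eq_zero_of_add_eq_smul {𝕜 E : Type*}
    [NormedAddCommGroup E] [NormedSpace ℝ E] [NormedDivisionRing 𝕜] [Module 𝕜 E]
    [NormSMulClass 𝕜 E] [SMulCommClass ℝ 𝕜 E] {F : ℝ → E} {c T : ℝ} {w : 𝕜}
    (hF : Function.Periodic F c) (hshift : ∀ x, F (x + T) = w • F x) (hw : w ≠ 1) :
    ∫ x in 0..c, F x = 0 := by
  have hfixed : w • ∫ x in 0..c, F x = ∫ x in 0..c, F x := by
    rw [← intervalIntegral.integral_smul, ← integral_congr (fun x _ => hshift x),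
      integral_comp_add_right, zero_add, add_comm, hF.intervalIntegral_add_eq T 0, zero_add]
  have : (w - 1) • ∫ x in 0..c, F x = 0 := by rw [sub_smul, one_smul, hfixed, sub_self]
  exact (smul_eq_zero.mp this).resolve_left (sub_ne_zero.mpr hw)

theorem Complex.exp_two_mul_ofReal_mul_I_eq_one_iff {x : ℝ} :
    Complex.exp (2 * x * Complex.I) = 1 ↔ Real.sin x = 0 := by
  rw [Complex.exp_eq_one_iff, Real.sin_eq_zero_iff]
  refine exists_congr fun n => ⟨fun h => ?_, fun h => ?_⟩
  · linarith [show 2 * x = n * (2 * π) by simpa using congrArg Complex.im h]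
  · rw [← h]; push_cast; ring

theorem Function.Periodic.comp_nat_mul_sub_eq {β : Type*} {φ : ℝ → β} {T s : ℝ} {ψ : ℝ → β}
    (hφ : Function.Periodic φ T) (hsym : ∀ τ, φ (s + T - τ) = ψ τ) (n : ℕ) (τ : ℝ) :
    φ (s + (n * T - τ)) = ψ τ := by
  rw [← hsym, show s + (n * T - τ) = s - τ + n * T by ring, hφ.nat_mul,
    show s + T - τ = s - τ + T by ring, hφ]

noncomputable section Melnikov

variable (J K L : ℝ → ℝ) (s : ℝ)

def melnikovIntegrand (τ₀ τ : ℝ) : ℝ :=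
  J (s + τ) * cos (2 * (τ₀ + τ)) + K (s + τ) * sin (2 * (τ₀ + τ)) + L (s + τ)

def halfPeriodIntegrand (τ : ℝ) : ℝ :=
  K (s + τ) * cos (2 * τ) - J (s + τ) * sin (2 * τ)

def complexHalfPeriodIntegrand (τ : ℝ) : ℂ :=
  (K (s + τ) + J (s + τ) * Complex.I) * Complex.exp (2 * τ * Complex.I)

theorem re_complexHalfPeriodIntegrand (τ : ℝ) :
    (complexHalfPeriodIntegrand J K s τ).re = halfPeriodIntegrand J K s τ := by
  simp [complexHalfPeriodIntegrand, halfPeriodIntegrand, Complex.exp_re, Complex.exp_im]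

variable {J K L s}

theorem complexHalfPeriodIntegrand_add_period {p : ℝ} (hJ : Function.Periodic J p)
    (hK : Function.Periodic K p) (τ : ℝ) :
    complexHalfPeriodIntegrand J K s (τ + p) =
      Complex.exp (2 * p * Complex.I) * complexHalfPeriodIntegrand J K s τ := by
  simp only [complexHalfPeriodIntegrand, ← add_assoc, hJ (s + τ), hK (s + τ)]
  push_cast
  rw [show 2 * ((τ : ℂ) + p) * Complex.I = 2 * p * Complex.I + 2 * τ * Complex.I by ring,
    Complex.exp_add]
  ring

theorem melnikovIntegrand_add_comp_sub {c : ℝ} (hc : ∃ m : ℤ, c = m * π)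
    (hJ : ∀ τ, J (s + (c - τ)) = -J (s + τ)) (hK : ∀ τ, K (s + (c - τ)) = K (s + τ))
    (hL : ∀ τ, L (s + (c - τ)) = -L (s + τ)) (τ₀ τ : ℝ) :
    melnikovIntegrand J K L s τ₀ τ + melnikovIntegrand J K L s τ₀ (c - τ) =
      2 * sin (2 * τ₀) * halfPeriodIntegrand J K s τ := by
  obtain ⟨m, rfl⟩ := hc
  simp only [melnikovIntegrand, halfPeriodIntegrand, hJ, hK, hL]
  rw [show 2 * (τ₀ + (m * π - τ)) = 2 * τ₀ - 2 * τ + m * (2 * π) by ring,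
    cos_add_int_mul_two_pi, sin_add_int_mul_two_pi, mul_add, cos_add, sin_add, cos_sub, sin_sub]
  ring

theorem halfPeriodIntegrand_comp_sub {c : ℝ} (hc : ∃ m : ℤ, c = m * π)
    (hJ : ∀ τ, J (s + (c - τ)) = -J (s + τ)) (hK : ∀ τ, K (s + (c - τ)) = K (s + τ)) (τ : ℝ) :
    halfPeriodIntegrand J K s (c - τ) = halfPeriodIntegrand J K s τ := by
  obtain ⟨m, rfl⟩ := hc
  simp only [halfPeriodIntegrand, hJ, hK]
  rw [show 2 * (m * π - τ) = -(2 * τ) + m * (2 * π) by ring,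
    cos_add_int_mul_two_pi, sin_add_int_mul_two_pi, cos_neg, sin_neg]
  ring

theorem integral_halfPeriodIntegrand_eq_zero {T c : ℝ} (hJc : Continuous J) (hKc : Continuous K)
    (hJT : Function.Periodic J T) (hKT : Function.Periodic K T)
    (hJ : Function.Periodic J c) (hK : Function.Periodic K c) (hc : ∃ m : ℤ, c = m * π)
    (hT : sin T ≠ 0) :
    ∫ τ in 0..c, halfPeriodIntegrand J K s τ = 0 := by
  have hcI : Complex.exp (2 * c * Complex.I) = 1 := by
    obtain ⟨m, rfl⟩ := hc
    exact Complex.exp_two_mul_ofReal_mul_I_eq_one_iff.mpr (sin_int_mul_pi m)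
  have hperiodic : Function.Periodic (complexHalfPeriodIntegrand J K s) c := fun τ => by
    rw [complexHalfPeriodIntegrand_add_period hJ hK, hcI, one_mul]
  have hzero := hperiodic.intervalIntegral_eq_zero_of_add_eq_smul
    (complexHalfPeriodIntegrand_add_period hJT hKT)
    (Complex.exp_two_mul_ofReal_mul_I_eq_one_iff.not.mpr hT)
  have hcont : Continuous (complexHalfPeriodIntegrand J K s) := by
    unfold complexHalfPeriodIntegrand; fun_prop
  calc ∫ τ in 0..c, halfPeriodIntegrand J K s τ
      = (∫ τ in 0..c, complexHalfPeriodIntegrand J K s τ).re := by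
        simp only [← re_complexHalfPeriodIntegrand]
        exact intervalIntegral_re (hcont.intervalIntegrable _ _)
    _ = 0 := by rw [hzero, Complex.zero_re]

end Melnikov

theorem melnikov_half_period_symmetry_general
    (T : ℝ) (a : ℕ)
    (hres : ∃ m : ℤ, (a : ℝ) * T = m * π)
    (J K L : ℝ → ℝ)
    (hJc : Continuous J) (hKc : Continuous K) (hLc : Continuous L)
    (hJper : ∀ u, J (u + T) = J u) (hKper : ∀ u, K (u + T) = K u)
    (hLper : ∀ u, L (u + T) = L u)
    (s : ℝ)
    (hJsym : ∀ τ, J (s + T - τ) = -J (s + τ))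
    (hKsym : ∀ τ, K (s + T - τ) = K (s + τ))
    (hLsym : ∀ τ, L (s + T - τ) = -L (s + τ))
    (M : ℝ → ℝ → ℝ)
    (hM : ∀ s' τ₀, M s' τ₀ = ∫ τ in (0:ℝ)..(a * T),
      (J (s' + τ) * cos (2 * (τ₀ + τ)) + K (s' + τ) * sin (2 * (τ₀ + τ)) + L (s' + τ)))
    (τ₀ : ℝ) :
    (a = 1 → M s τ₀ = 2 * sin (2 * τ₀) *
      ∫ τ in (0:ℝ)..(T / 2), (K (s + τ) * cos (2 * τ) - J (s + τ) * sin (2 * τ))) ∧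
    (2 ≤ a → sin T ≠ 0 → M s τ₀ = 2 * 0 *
      ∫ τ in (0:ℝ)..(T / 2), (K (s + τ) * cos (2 * τ) - J (s + τ) * sin (2 * τ))) := by
  have hJ := Function.Periodic.comp_nat_mul_sub_eq hJper hJsym a
  have hK := Function.Periodic.comp_nat_mul_sub_eq hKper hKsym a
  have hL := Function.Periodic.comp_nat_mul_sub_eq hLper hLsym a
  have hreduce : M s τ₀ = sin (2 * τ₀) * ∫ τ in 0..a * T, halfPeriodIntegrand J K s τ := by
    have hsum := integral_add_comp_sub_left_eq_two_smul (c := a * T)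
      (f := melnikovIntegrand J K L s τ₀) (by unfold melnikovIntegrand; fun_prop)
    rw [integral_congr fun τ _ => melnikovIntegrand_add_comp_sub hres hJ hK hL τ₀ τ,
      intervalIntegral.integral_const_mul, smul_eq_mul] at hsum
    rw [hM]
    change ∫ τ in 0..a * T, melnikovIntegrand J K L s τ₀ τ = _
    linarith
  refine ⟨fun ha1 => ?_, fun _ hsinT => ?_⟩
  · subst ha1
    rw [Nat.cast_one, one_mul] at hres hreduce hJ hK
    rw [hreduce, integral_eq_two_smul_integral_half_of_comp_sub_eq
      (by unfold halfPeriodIntegrand; fun_prop) (halfPeriodIntegrand_comp_sub hres hJ hK),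
      smul_eq_mul]
    unfold halfPeriodIntegrand
    ring
  · rw [hreduce, integral_halfPeriodIntegrand_eq_zero hJc hKc hJper hKper
      (Function.Periodic.nat_mul hJper a) (Function.Periodic.nat_mul hKper a) hres hsinT]
    ring

theorem melnikov_half_period_symmetry
    (T : ℝ) (hT : 0 < T) (a : ℕ) (ha : 0 < a)
    (hres : ∃ m : ℤ, (a : ℝ) * T = m * π)
    (J K L : ℝ → ℝ)
    (hJc : Continuous J) (hKc : Continuous K) (hLc : Continuous L)
    (hJper : ∀ u, J (u + T) = J u) (hKper : ∀ u, K (u + T) = K u)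
    (hLper : ∀ u, L (u + T) = L u)
    (s : ℝ)
    (hJsym : ∀ τ, J (s + T - τ) = -J (s + τ))
    (hKsym : ∀ τ, K (s + T - τ) = K (s + τ))
    (hLsym : ∀ τ, L (s + T - τ) = -L (s + τ))
    (M : ℝ → ℝ → ℝ)
    (hM : ∀ s' τ₀, M s' τ₀ = ∫ τ in (0:ℝ)..(a * T),
      (J (s' + τ) * cos (2 * (τ₀ + τ)) + K (s' + τ) * sin (2 * (τ₀ + τ)) + L (s' + τ)))
    (τ₀ : ℝ) :
    (a = 1 → M s τ₀ = 2 * sin (2 * τ₀) *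
      ∫ τ in (0:ℝ)..(T / 2), (K (s + τ) * cos (2 * τ) - J (s + τ) * sin (2 * τ))) ∧
    (2 ≤ a → sin T ≠ 0 → M s τ₀ = 2 * 0 *
      ∫ τ in (0:ℝ)..(T / 2), (K (s + τ) * cos (2 * τ) - J (s + τ) * sin (2 * τ))) :=
  melnikov_half_period_symmetry_general T a hres J K L hJc hKc hLc hJper hKper hLper s hJsym hKsym
    hLsym M hM τ₀
end

section
/- Let M(s, τ₀) = ∫₀^{aT*} (J(s+τ)cos(2(τ₀+τ)) + K(s+τ)sin(2(τ₀+τ))) dτ with J, K continuous and T*-periodic, a ≥ 2, a·T* = mπ for an integer m, and sin(T*) ≠ 0, and suppose there exists s₀ satisfying the half-period symmetries J(s₀ + T* - τ) = -J(s₀ + τ) and K(s₀ + T* - τ) = K(s₀ + τ) for all τ. Then M(s, τ₀) = 0 identically for all s and τ₀. -/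
/-!
Write `M(s, ·)` for the Melnikov integral over a window of length `L = a T* = m π`. By the addition
formulas, `M(s, τ₀) = cos (2τ₀) A + sin (2τ₀) B` for two numbers `A, B` depending on `s` only.
Shifting the integration variable by `T*` and using that the integrand is `L`-periodic shows
`M(s, τ₀ + T*) = M(s + T*, τ₀ + T*) = M(s, τ₀)`. A combination `cos (2τ₀) A + sin (2τ₀) B` invariant
under `τ₀ ↦ τ₀ + T*` with `sin T* ≠ 0` vanishes: evaluating at `τ₀ = -T*/2` and `τ₀ = π/4 - T*/2`
gives `B sin T* = 0` and `A sin T* = 0`.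
-/

open Real MeasureTheory intervalIntegral

noncomputable def melnikov (J K : ℝ → ℝ) (L s τ₀ : ℝ) : ℝ :=
  ∫ τ in (0:ℝ)..L, (J (s + τ) * cos (2 * (τ₀ + τ)) + K (s + τ) * sin (2 * (τ₀ + τ)))

section Melnikov

variable {J K : ℝ → ℝ} {L T : ℝ}

theorem melnikov_eq_cos_mul_add_sin_mul (hJ : Continuous J) (hK : Continuous K) (s τ₀ : ℝ) :
    melnikov J K L s τ₀ =
      cos (2 * τ₀) * melnikov J K L s 0 + sin (2 * τ₀) * melnikov K (-J) L s 0 := by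
  have integrand_eq : ∀ τ, J (s + τ) * cos (2 * (τ₀ + τ)) + K (s + τ) * sin (2 * (τ₀ + τ)) =
      cos (2 * τ₀) * (J (s + τ) * cos (2 * (0 + τ)) + K (s + τ) * sin (2 * (0 + τ))) +
      sin (2 * τ₀) * (K (s + τ) * cos (2 * (0 + τ)) + (-J) (s + τ) * sin (2 * (0 + τ))) := by
    intro τ
    rw [mul_add, cos_add, sin_add, zero_add, Pi.neg_apply]
    ring
  unfold melnikov
  simp_rw [integrand_eq]
  rw [intervalIntegral.integral_add ((by fun_prop : Continuous _).intervalIntegrable _ _)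
    ((by fun_prop : Continuous _).intervalIntegrable _ _), intervalIntegral.integral_const_mul,
    intervalIntegral.integral_const_mul]

theorem melnikov_add_add (hJ : Function.Periodic J L) (hK : Function.Periodic K L)
    (hL : ∃ m : ℤ, L = m * π) (s τ₀ c : ℝ) :
    melnikov J K L (s + c) (τ₀ + c) = melnikov J K L s τ₀ := by
  obtain ⟨m, hm⟩ := hL
  set g : ℝ → ℝ := fun τ => J (s + τ) * cos (2 * (τ₀ + τ)) + K (s + τ) * sin (2 * (τ₀ + τ))
  have hg : Function.Periodic g L := by
    intro τ
    have hJτ : J (s + (τ + L)) = J (s + τ) := by rw [← add_assoc, hJ]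
    have hKτ : K (s + (τ + L)) = K (s + τ) := by rw [← add_assoc, hK]
    have hangle : 2 * (τ₀ + (τ + L)) = 2 * (τ₀ + τ) + m * (2 * π) := by rw [hm]; ring
    simp only [g, hJτ, hKτ, hangle, cos_add_int_mul_two_pi, sin_add_int_mul_two_pi]
  calc melnikov J K L (s + c) (τ₀ + c) = ∫ τ in (0:ℝ)..L, g (τ + c) := by
        unfold melnikov
        congr 1 with τ
        simp only [g]
        ring_nf
    _ = ∫ τ in c..c + L, g τ := by rw [integral_comp_add_right, zero_add, add_comm L]
    _ = ∫ τ in (0:ℝ)..0 + L, g τ := hg.intervalIntegral_add_eq c 0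
    _ = melnikov J K L s τ₀ := by rw [zero_add]; rfl

theorem melnikov_add_period (hJ : Function.Periodic J T) (hK : Function.Periodic K T)
    (s τ₀ : ℝ) : melnikov J K L (s + T) τ₀ = melnikov J K L s τ₀ := by
  unfold melnikov
  simp only [add_right_comm s T, hJ _, hK _]

end Melnikov

theorem eq_zero_of_cos_mul_add_sin_mul_periodic {A B T : ℝ} (hsin : sin T ≠ 0)
    (h : Function.Periodic (fun σ => cos (2 * σ) * A + sin (2 * σ) * B) T) :
    A = 0 ∧ B = 0 := by
  have hB := h (-T / 2)
  have hA := h (π / 4 - T / 2)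
  simp only at hA hB
  rw [show 2 * (-T / 2 + T) = T by ring, show 2 * (-T / 2) = -T by ring] at hB
  rw [show 2 * (π / 4 - T / 2 + T) = π / 2 + T by ring,
    show 2 * (π / 4 - T / 2) = π / 2 - T by ring] at hA
  rw [cos_neg, sin_neg] at hB
  rw [cos_add, sin_add, cos_sub, sin_sub, cos_pi_div_two, sin_pi_div_two] at hA
  constructor
  · exact (mul_eq_zero.mp (by linarith : sin T * A = 0)).resolve_left hsin
  · exact (mul_eq_zero.mp (by linarith : sin T * B = 0)).resolve_left hsin

theorem melnikov_vanishes_identically_for_a_ge_two_general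
    (T : ℝ) (a : ℕ)
    (hres : ∃ m : ℤ, (a : ℝ) * T = m * π) (hsin : sin T ≠ 0)
    (J K : ℝ → ℝ) (hJc : Continuous J) (hKc : Continuous K)
    (hJper : ∀ u, J (u + T) = J u) (hKper : ∀ u, K (u + T) = K u)
    (M : ℝ → ℝ → ℝ)
    (hM : ∀ s τ₀, M s τ₀ = ∫ τ in (0:ℝ)..(a * T),
      (J (s + τ) * cos (2 * (τ₀ + τ)) + K (s + τ) * sin (2 * (τ₀ + τ)))) :
    ∀ s τ₀ : ℝ, M s τ₀ = 0 := by
  intro s τ₀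
  have hperiodic : Function.Periodic (melnikov J K (a * T) s) T := fun σ => by
    rw [← melnikov_add_period hJper hKper, melnikov_add_add (Function.Periodic.nat_mul hJper a)
      (Function.Periodic.nat_mul hKper a) hres]
  rw [funext (melnikov_eq_cos_mul_add_sin_mul hJc hKc s)] at hperiodic
  obtain ⟨hA, hB⟩ := eq_zero_of_cos_mul_add_sin_mul_periodic hsin hperiodic
  rw [hM, ← melnikov, melnikov_eq_cos_mul_add_sin_mul hJc hKc, hA, hB]
  ring

theorem melnikov_vanishes_identically_for_a_ge_two
    (T : ℝ) (hT : 0 < T) (a : ℕ) (ha : 2 ≤ a)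
    (hres : ∃ m : ℤ, (a : ℝ) * T = m * π) (hsin : sin T ≠ 0)
    (J K : ℝ → ℝ) (hJc : Continuous J) (hKc : Continuous K)
    (hJper : ∀ u, J (u + T) = J u) (hKper : ∀ u, K (u + T) = K u)
    (s₀ : ℝ)
    (hJsym : ∀ τ, J (s₀ + T - τ) = -J (s₀ + τ))
    (hKsym : ∀ τ, K (s₀ + T - τ) = K (s₀ + τ))
    (M : ℝ → ℝ → ℝ)
    (hM : ∀ s τ₀, M s τ₀ = ∫ τ in (0:ℝ)..(a * T),
      (J (s + τ) * cos (2 * (τ₀ + τ)) + K (s + τ) * sin (2 * (τ₀ + τ)))) :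
    ∀ s τ₀ : ℝ, M s τ₀ = 0 :=
  melnikov_vanishes_identically_for_a_ge_two_general T a hres hsin J K hJc hKc hJper hKper M hM
end
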